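/- arXiv:1410.6829 — 2 statements merged into one kernel-verified Lean document; each statement's English description precedes it below -/
import Mathlib

section
/- Let n ≥ 4 be an even integer. Let (l,m) and (l',m') be pairs of natural numbers both belonging to the set 𝒮 = {(l,m) : 0 ≤ l ≤ n/2 − 2 and 0 ≤ m < n} ∪ {(l,m) : l = n/2 − 1 and 0 ≤ m < n/2}, and let t ≥ 0 be an integer. Define the integers α₁ = m − m' + l + t and α₂ = m − m' − l' + t. Then at least one of the following holds: (i) α₂ ≥ 0; (ii) 2 − n ≤ α₂ ≤ −1; (iii) 1 − n ≤ α₁ ≤ −2. -/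
/-- Combinatorial core of Lemma 3.2 of the paper: for `n ≥ 4` even, indices `(l,m)` and
`(l',m')` in the window set `𝒮` and `t ≥ 0`, the Borel--Weil--Bott weight entries
`α₁ = m - m' + l + t` and `α₂ = m - m' - l' + t` satisfy: `α₂ ≥ 0`, or
`2 - n ≤ α₂ ≤ -1`, or `1 - n ≤ α₁ ≤ -2`. -/
theorem bwb_weight_trichotomy (n : ℕ) (hn : 4 ≤ n) (heven : Even n)
    (l m l' m' : ℕ) (t : ℤ) (ht : 0 ≤ t)
    (hS : (l ≤ n / 2 - 2 ∧ m < n) ∨ (l = n / 2 - 1 ∧ m < n / 2))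
    (hS' : (l' ≤ n / 2 - 2 ∧ m' < n) ∨ (l' = n / 2 - 1 ∧ m' < n / 2)) :
    (0 ≤ (m : ℤ) - m' - l' + t) ∨
    ((2 : ℤ) - n ≤ (m : ℤ) - m' - l' + t ∧ (m : ℤ) - m' - l' + t ≤ -1) ∨
    ((1 : ℤ) - n ≤ (m : ℤ) - m' + l + t ∧ (m : ℤ) - m' + l + t ≤ -2) := by
  obtain ⟨k, hk⟩ := heven
  omega
end

section
/- Let S and V be finite-dimensional complex vector spaces, θ : S* → S a linear map with f(θ(g)) = −g(θ(f)) for all f, g ∈ S*, and Ω : V → V* a linear map with (Ω(v))(w) = −(Ω(w))(v) for all v, w ∈ V; let B(x,y) = tr(θ ∘ x* ∘ Ω ∘ y) on Hom(S,V). Let Λ ⊆ S be a subspace such that f(θ(g)) = 0 for all f, g in the annihilator of Λ in S*, and set N = {x ∈ Hom(S,V) : x(λ) = 0 for all λ ∈ Λ}. Then B(x,y) = 0 for all x, y ∈ N. If moreover dim Λ = (dim S)/2, then dim N = (dim S · dim V)/2, so N is a maximal isotropic subspace of (Hom(S,V), B). -/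
open Module LinearMap

/-- The subspace `N = Hom(S/Λ, V) ⊆ Hom(S,V)` of linear maps vanishing on a subspace
`Λ ⊆ S`. -/
def vanishingOn {S V : Type*} [AddCommGroup S] [Module ℂ S]
    [AddCommGroup V] [Module ℂ V] (Λ : Submodule ℂ S) :
    Submodule ℂ (S →ₗ[ℂ] V) where
  carrier := {x | ∀ l ∈ Λ, x l = 0}
  add_mem' := by
    intro x y hx hy l hl
    simp [hx l hl, hy l hl]
  zero_mem' := by intro l hl; simp
  smul_mem' := by
    intro c x hx l hl
    simp [hx l hl]

/-- If `Λ ⊆ S` is isotropic for the bivector `θ` (i.e. `f(θ(g)) = 0` for all `f, g` in the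
annihilator of `Λ`), then `N = Hom(S/Λ, V)` is isotropic for the bilinear form
`B(x,y) = tr(θ ∘ x* ∘ Ω ∘ y)` on `Hom(S,V)`; and if `Λ` is Lagrangian
(`dim Λ = dim S / 2`) then `dim N = dim S · dim V / 2`, i.e. `N` is maximal isotropic. -/
theorem homSmodLambdaV_maximal_isotropic
    (S V : Type*) [AddCommGroup S] [Module ℂ S] [FiniteDimensional ℂ S]
    [AddCommGroup V] [Module ℂ V] [FiniteDimensional ℂ V]
    (θ : Module.Dual ℂ S →ₗ[ℂ] S) (hθ : ∀ f g : Module.Dual ℂ S, f (θ g) = -g (θ f))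
    (Ω : V →ₗ[ℂ] Module.Dual ℂ V) (hΩ : ∀ v w : V, Ω v w = -Ω w v)
    (B : (S →ₗ[ℂ] V) → (S →ₗ[ℂ] V) → ℂ)
    (hB : ∀ x y : S →ₗ[ℂ] V,
      B x y = LinearMap.trace ℂ S (θ ∘ₗ LinearMap.dualMap x ∘ₗ Ω ∘ₗ y))
    (Λ : Submodule ℂ S)
    (hΛ : ∀ f ∈ Λ.dualAnnihilator, ∀ g ∈ Λ.dualAnnihilator, f (θ g) = 0) :
    (∀ x ∈ vanishingOn (V := V) Λ, ∀ y ∈ vanishingOn (V := V) Λ, B x y = 0) ∧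
    (2 * Module.finrank ℂ Λ = Module.finrank ℂ S →
      2 * Module.finrank ℂ (vanishingOn (V := V) Λ) =
        Module.finrank ℂ S * Module.finrank ℂ V) := by
  have key : ∀ x ∈ vanishingOn (V := V) Λ, ∀ y ∈ vanishingOn (V := V) Λ, B x y = 0 := by
    intro x hx y hy
    rw [hB]
    set T : S →ₗ[ℂ] S := θ ∘ₗ LinearMap.dualMap x ∘ₗ Ω ∘ₗ y with hT
    have hrange : ∀ s, T s ∈ Λ := by
      intro s
      have hann : (LinearMap.dualMap x) (Ω (y s)) ∈ Λ.dualAnnihilator := by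
        rw [Submodule.mem_dualAnnihilator]
        intro l hl
        simp [LinearMap.dualMap_apply, hx l hl]
      have : θ ((LinearMap.dualMap x) (Ω (y s))) ∈ Λ := by
        rw [← Subspace.dualAnnihilator_dualCoannihilator_eq (W := Λ),
          Submodule.mem_dualCoannihilator]
        intro f hf
        exact hΛ f hf _ hann
      simpa [hT] using this
    have hsq : T * T = 0 := by
      ext s
      have h0 : y (θ (x.dualMap (Ω (y s)))) = 0 := hy _ (hrange s)
      simp [Module.End.mul_apply, hT, LinearMap.comp_apply, h0]
    have hnil : IsNilpotent T := ⟨2, by rw [pow_two]; exact hsq⟩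
    exact (LinearMap.isNilpotent_trace_of_isNilpotent hnil).eq_zero
  refine ⟨key, ?_⟩
  intro hdim
  have hker : LinearMap.ker (LinearMap.domRestrict' (M₂ := V) Λ) = vanishingOn (V := V) Λ := by
    ext x
    constructor
    · intro hx l hl
      have := LinearMap.congr_fun hx ⟨l, hl⟩
      simpa using this
    · intro hx
      ext ⟨l, hl⟩
      simpa using hx l hl
  have hsurj : Function.Surjective (LinearMap.domRestrict' (M₂ := V) (R := ℂ) Λ) := by
    intro g
    obtain ⟨q, hq⟩ := Submodule.exists_isCompl Λ
    refine ⟨g ∘ₗ (Submodule.linearProjOfIsCompl Λ q hq : S →ₗ[ℂ] Λ), ?_⟩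
    ext ⟨l, hl⟩
    exact congrArg g (Submodule.linearProjOfIsCompl_apply_left hq ⟨l, hl⟩)
  have hrn := LinearMap.finrank_range_add_finrank_ker
    (LinearMap.domRestrict' (M₂ := V) (R := ℂ) Λ)
  rw [hker, LinearMap.range_eq_top.2 hsurj] at hrn
  have h1 : finrank ℂ (Λ →ₗ[ℂ] V) = finrank ℂ Λ * finrank ℂ V := by rw [Module.finrank_linearMap]
  have h2 : finrank ℂ (S →ₗ[ℂ] V) = finrank ℂ S * finrank ℂ V := by rw [Module.finrank_linearMap]
  rw [finrank_top, h1, h2] at hrn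
  have hq2 : finrank ℂ S * finrank ℂ V = 2 * (finrank ℂ Λ * finrank ℂ V) := by
    rw [← hdim]; ring
  omega
end
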